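/- arXiv:2302.05545 — 2 statements merged into one kernel-verified Lean document; each statement's English description precedes it below -/
import Mathlib

section
/- Let X be a random vector in ℝ^d with E[‖X‖²] < ∞, A ∈ ℝ^{(k-1)×d} with k-1 < d, b' = AX, and let E be a random vector with second-moment matrix K = E[EEᵀ]. Define X̂ = A⁺b' + (1/2)(I - A⁺A)1 + A⁺E. Then E[‖X - X̂‖²] = Tr((I - A⁺A) K_{1/2}) + Tr((A⁺)ᵀA⁺ K), where K_{1/2} = E[(X - ½1)(X - ½1)ᵀ]. -/
/-!
Put `P = I - A⁺A` and `Y = X - ½𝟙`; then `X - X̂ = PY - A⁺E`. The Penrose identities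
`A⁺AA⁺ = A⁺` and `(A⁺A)ᵀ = A⁺A` make `P` an orthogonal projection with `PᵀA⁺ = 0`, so the two
error terms are orthogonal pointwise and `‖X - X̂‖² = YᵀPY + Eᵀ(A⁺)ᵀA⁺E`. The expectation of a
quadratic form `ZᵀMZ` is `Tr(M E[ZZᵀ])`, which gives the two traces.
-/

open Matrix MeasureTheory

namespace Matrix

variable {ι κ ν : Type*} [Fintype ι] [Fintype κ] [Fintype ν]

lemma mulVec_dotProduct_mulVec {R : Type*} [CommRing R] (B : Matrix ι κ R)
    (C : Matrix ι ν R) (y : κ → R) (e : ν → R) :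
    (B *ᵥ y) ⬝ᵥ (C *ᵥ e) = y ⬝ᵥ ((Bᵀ * C) *ᵥ e) := by
  rw [← vecMul_transpose, ← dotProduct_mulVec, mulVec_mulVec]

lemma sub_dotProduct_sub_of_dotProduct_eq_zero {R : Type*} [CommRing R] {u v : ι → R}
    (h : u ⬝ᵥ v = 0) : (u - v) ⬝ᵥ (u - v) = u ⬝ᵥ u + v ⬝ᵥ v := by
  simp only [sub_dotProduct, dotProduct_sub, dotProduct_comm v u, h]
  ring

variable {R : Type*} [CommRing R] {A : Matrix κ ι R} {Ap : Matrix ι κ R}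

lemma transpose_one_sub_mul_pinv [DecidableEq ι] (h2 : Ap * A * Ap = Ap) (h4 : (Ap * A)ᵀ = Ap * A) :
    (1 - Ap * A)ᵀ * Ap = 0 := by
  rw [transpose_sub, transpose_one, h4, Matrix.sub_mul, Matrix.one_mul, h2, sub_self]

lemma transpose_one_sub_mul_self [DecidableEq ι] (h2 : Ap * A * Ap = Ap)
    (h4 : (Ap * A)ᵀ = Ap * A) :
    (1 - Ap * A)ᵀ * (1 - Ap * A) = 1 - Ap * A := by
  rw [mul_sub, mul_one, ← Matrix.mul_assoc, transpose_one_sub_mul_pinv h2 h4, Matrix.zero_mul,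
    sub_zero, transpose_sub, transpose_one, h4]

lemma sub_pinv_estimate_eq [DecidableEq ι] (A : Matrix κ ι R) (Ap : Matrix ι κ R)
    (x c : ι → R) (e : κ → R) :
    x - (Ap *ᵥ (A *ᵥ x) + (1 - Ap * A) *ᵥ c + Ap *ᵥ e)
      = (1 - Ap * A) *ᵥ (x - c) - Ap *ᵥ e := by
  simp only [mulVec_mulVec, mulVec_sub, sub_mulVec, one_mulVec]
  abel

end Matrix

section SecondMoments

variable {Ω ι : Type*} [MeasurableSpace Ω] {μ : Measure Ω} [Fintype ι] {Z : Ω → ι → ℝ}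

lemma integrable_sub_const_mul_sub_const [IsFiniteMeasure μ] {f g : Ω → ℝ}
    (hf : Integrable f μ) (hg : Integrable g μ) (hfg : Integrable (fun ω => f ω * g ω) μ)
    (a b : ℝ) : Integrable (fun ω => (f ω - a) * (g ω - b)) μ := by
  have h : (fun ω => (f ω - a) * (g ω - b))
      = fun ω => f ω * g ω - b * f ω - a * g ω + a * b := by
    funext ω; ring
  rw [h]
  exact ((hfg.sub (hf.const_mul b)).sub (hg.const_mul a)).add (integrable_const _)

lemma dotProduct_mulVec_eq_sum (M : Matrix ι ι ℝ) (z : ι → ℝ) :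
    z ⬝ᵥ (M *ᵥ z) = ∑ i, ∑ j, M i j * (z j * z i) := by
  simp only [dotProduct, mulVec, Finset.mul_sum]
  exact Finset.sum_congr rfl fun i _ => Finset.sum_congr rfl fun j _ => by ring

variable (hZ : ∀ i j, Integrable (fun ω => Z ω i * Z ω j) μ) (M : Matrix ι ι ℝ)
include hZ

lemma integrable_dotProduct_mulVec : Integrable (fun ω => Z ω ⬝ᵥ (M *ᵥ Z ω)) μ := by
  simp only [dotProduct_mulVec_eq_sum]
  exact integrable_finsetSum _ fun i _ => integrable_finsetSum _ fun j _ =>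
    (hZ j i).const_mul _

lemma integral_dotProduct_mulVec {S : Matrix ι ι ℝ}
    (hS : ∀ i j, S i j = ∫ ω, Z ω i * Z ω j ∂μ) :
    ∫ ω, Z ω ⬝ᵥ (M *ᵥ Z ω) ∂μ = trace (M * S) := by
  have htrace : trace (M * S) = ∑ i, ∑ j, M i j * ∫ ω, Z ω j * Z ω i ∂μ := by
    simp only [trace, diag_apply, mul_apply, hS]
  simp only [dotProduct_mulVec_eq_sum, htrace]
  rw [integral_finsetSum (f := fun i ω => ∑ j, M i j * (Z ω j * Z ω i)) _
    fun i _ => integrable_finsetSum _ fun j _ => (hZ j i).const_mul _]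
  refine Finset.sum_congr rfl fun i _ => ?_
  rw [integral_finsetSum (f := fun j ω => M i j * (Z ω j * Z ω i)) _
    fun j _ => (hZ j i).const_mul _]
  exact Finset.sum_congr rfl fun j _ => integral_const_mul _ _

end SecondMoments

theorem stmt6_general {m d : ℕ} {Ω : Type*} [MeasurableSpace Ω]
    (μ : Measure Ω) [IsProbabilityMeasure μ]
    (A : Matrix (Fin m) (Fin d) ℝ) (Ap : Matrix (Fin d) (Fin m) ℝ)
    (h2 : Ap * A * Ap = Ap)
    (h4 : (Ap * A)ᵀ = Ap * A)
    (X : Ω → Fin d → ℝ) (E : Ω → Fin m → ℝ)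
    (hXi : ∀ i, Integrable (fun ω => X ω i) μ)
    (hXij : ∀ i j, Integrable (fun ω => X ω i * X ω j) μ)
    (hEij : ∀ i j, Integrable (fun ω => E ω i * E ω j) μ)
    (Khalf : Matrix (Fin d) (Fin d) ℝ)
    (hKhalf : ∀ i j, Khalf i j = ∫ ω, (X ω i - 1/2) * (X ω j - 1/2) ∂μ)
    (K : Matrix (Fin m) (Fin m) ℝ)
    (hK : ∀ i j, K i j = ∫ ω, E ω i * E ω j ∂μ)
    (Xhat : Ω → Fin d → ℝ)
    (hXhat : ∀ ω, Xhat ω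
      = Ap *ᵥ (A *ᵥ X ω) + (1/2 : ℝ) • ((1 - Ap * A) *ᵥ (fun _ => 1)) + Ap *ᵥ E ω) :
    ∫ ω, ∑ i, (X ω i - Xhat ω i) ^ 2 ∂μ
      = Matrix.trace ((1 - Ap * A) * Khalf) + Matrix.trace (Apᵀ * Ap * K) := by
  set P : Matrix (Fin d) (Fin d) ℝ := 1 - Ap * A
  set Y : Ω → Fin d → ℝ := fun ω i => X ω i - 1/2 with hY
  have hYij : ∀ i j, Integrable (fun ω => Y ω i * Y ω j) μ := fun i j =>
    integrable_sub_const_mul_sub_const (hXi i) (hXi j) (hXij i j) _ _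
  have herr : ∀ ω, X ω - Xhat ω = P *ᵥ Y ω - Ap *ᵥ E ω := fun ω => by
    rw [hXhat, ← mulVec_smul, sub_pinv_estimate_eq]
    congr 2
    funext i
    simp [hY]
  have horth : ∀ ω, (P *ᵥ Y ω) ⬝ᵥ (Ap *ᵥ E ω) = 0 := fun ω => by
    rw [mulVec_dotProduct_mulVec, transpose_one_sub_mul_pinv h2 h4, zero_mulVec,
      dotProduct_zero]
  have hsq : ∀ ω, ∑ i, (X ω i - Xhat ω i) ^ 2
      = Y ω ⬝ᵥ (P *ᵥ Y ω) + E ω ⬝ᵥ ((Apᵀ * Ap) *ᵥ E ω) := fun ω => by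
    calc ∑ i, (X ω i - Xhat ω i) ^ 2 = (X ω - Xhat ω) ⬝ᵥ (X ω - Xhat ω) := by
          simp only [dotProduct, Pi.sub_apply, sq]
      _ = (P *ᵥ Y ω) ⬝ᵥ (P *ᵥ Y ω) + (Ap *ᵥ E ω) ⬝ᵥ (Ap *ᵥ E ω) := by
          rw [herr, sub_dotProduct_sub_of_dotProduct_eq_zero (horth ω)]
      _ = _ := by
          rw [mulVec_dotProduct_mulVec, mulVec_dotProduct_mulVec,
            (transpose_one_sub_mul_self h2 h4 : Pᵀ * P = P)]
  simp only [hsq]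
  rw [integral_add (integrable_dotProduct_mulVec hYij P) (integrable_dotProduct_mulVec hEij _),
    integral_dotProduct_mulVec hYij P hKhalf, integral_dotProduct_mulVec hEij _ hK]

/-- MSE of the half* estimator with noisy score. With `A⁺` the Moore–Penrose
pseudoinverse of `A` (`k-1 < d`), `X̂ = A⁺(AX) + ½(I - A⁺A)𝟙 + A⁺E`, one has
`E[‖X - X̂‖²] = Tr((I - A⁺A)K_{½𝟙}) + Tr((A⁺)ᵀA⁺K)`. -/
theorem stmt6 {m d : ℕ} {Ω : Type*} [MeasurableSpace Ω]
    (μ : Measure Ω) [IsProbabilityMeasure μ]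
    (hmd : m < d)
    (A : Matrix (Fin m) (Fin d) ℝ) (Ap : Matrix (Fin d) (Fin m) ℝ)
    (h1 : A * Ap * A = A) (h2 : Ap * A * Ap = Ap)
    (h3 : (A * Ap)ᵀ = A * Ap) (h4 : (Ap * A)ᵀ = Ap * A)
    (X : Ω → Fin d → ℝ) (E : Ω → Fin m → ℝ)
    (hXi : ∀ i, Integrable (fun ω => X ω i) μ)
    (hXij : ∀ i j, Integrable (fun ω => X ω i * X ω j) μ)
    (hEij : ∀ i j, Integrable (fun ω => E ω i * E ω j) μ)
    (Khalf : Matrix (Fin d) (Fin d) ℝ)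
    (hKhalf : ∀ i j, Khalf i j = ∫ ω, (X ω i - 1/2) * (X ω j - 1/2) ∂μ)
    (K : Matrix (Fin m) (Fin m) ℝ)
    (hK : ∀ i j, K i j = ∫ ω, E ω i * E ω j ∂μ)
    (Xhat : Ω → Fin d → ℝ)
    (hXhat : ∀ ω, Xhat ω
      = Ap *ᵥ (A *ᵥ X ω) + (1/2 : ℝ) • ((1 - Ap * A) *ᵥ (fun _ => 1)) + Ap *ᵥ E ω) :
    ∫ ω, ∑ i, (X ω i - Xhat ω i) ^ 2 ∂μ
      = Matrix.trace ((1 - Ap * A) * Khalf) + Matrix.trace (Apᵀ * Ap * K) :=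
  stmt6_general μ A Ap h2 h4 X E hXi hXij hEij Khalf hKhalf K hK Xhat hXhat
end

section
/- Let A ∈ ℝ^{(k-1)×d} with full row rank, R an orthogonal d×d matrix, X a random vector in ℝ^d with mean μ and K₀ = E[XXᵀ]. Define X̂ = RᵀA⁺AX + (1/2)(I - RᵀA⁺AR)1. Then (1/d)E[‖X - X̂‖²] = (1/d)Tr(K_{½1}) + (1/d)Tr(A⁺A(K₀ - 2K₀Rᵀ + R M Rᵀ)), where M = 1(μ - ¼1)ᵀ and K_{½1} = E[(X-½1)(X-½1)ᵀ]. -/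
open Matrix MeasureTheory

lemma dp_mulVec {d : ℕ} (M N : Matrix (Fin d) (Fin d) ℝ) (a b : Fin d → ℝ) :
    (M *ᵥ a) ⬝ᵥ (N *ᵥ b) = a ⬝ᵥ ((Mᵀ * N) *ᵥ b) := by
  rw [dotProduct_mulVec, vecMul_mulVec, ← dotProduct_mulVec]

lemma tr_vmv {d : ℕ} (P S : Matrix (Fin d) (Fin d) ℝ) (a b : Fin d → ℝ) :
    trace (P * vecMulVec a b * S) = (P *ᵥ a) ⬝ᵥ (b ᵥ* S) := by
  simp only [trace, diag, mul_apply, vecMulVec_apply, dotProduct, mulVec, vecMul,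
    Finset.sum_mul, Finset.mul_sum]
  refine Finset.sum_congr rfl fun i _ => ?_
  refine Finset.sum_congr rfl fun j _ => ?_
  refine Finset.sum_congr rfl fun k _ => ?_
  ring

lemma alg {d : ℕ} (Q R K₀ : Matrix (Fin d) (Fin d) ℝ) (μv : Fin d → ℝ)
    (hQ : Q * Q = Q) (hQt : Qᵀ = Q) (hRR : R * Rᵀ = 1) (hK : K₀ᵀ = K₀) :
    trace ((1 - Rᵀ * Q) * K₀ * (1 - Rᵀ * Q)ᵀ)
      + 2 * (((-(1/2:ℝ)) • ((1 - Rᵀ * Q * R) *ᵥ (fun _ => (1:ℝ)))) ⬝ᵥ ((1 - Rᵀ * Q) *ᵥ μv))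
      + (((-(1/2:ℝ)) • ((1 - Rᵀ * Q * R) *ᵥ (fun _ => (1:ℝ))))
          ⬝ᵥ ((-(1/2:ℝ)) • ((1 - Rᵀ * Q * R) *ᵥ (fun _ => (1:ℝ)))))
    = (trace K₀ - (∑ i, μv i) + (d : ℝ)/4)
      + trace (Q * (K₀ - 2 * (K₀ * Rᵀ)
          + R * (vecMulVec (fun _ => 1) (fun j => μv j - 1/4)) * Rᵀ)) := by
  set e : Fin d → ℝ := fun _ => 1 with he
  set N : Matrix (Fin d) (Fin d) ℝ := Rᵀ * Q * R with hN
  set w : Fin d → ℝ := N *ᵥ e with hw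
  have hRRx : ∀ (Y : Matrix (Fin d) (Fin d) ℝ), R * (Rᵀ * Y) = Y := fun Y => by
    rw [← mul_assoc, hRR, one_mul]
  have hQx : ∀ (Y : Matrix (Fin d) (Fin d) ℝ), Q * (Q * Y) = Q * Y := fun Y => by
    rw [← mul_assoc, hQ]
  have hNt : Nᵀ = N := by
    rw [hN]; simp [transpose_mul, hQt, mul_assoc]
  have hNN : N * N = N := by
    rw [hN]; simp only [mul_assoc, hRRx, hQx]
  -- trace piece
  have hTt : (1 - Rᵀ * Q)ᵀ = 1 - Q * R := by
    simp [transpose_sub, transpose_mul, hQt]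
  have e1 : (1 - Rᵀ * Q) * K₀ * (1 - Rᵀ * Q)ᵀ
      = K₀ - K₀ * (Q * R) - Rᵀ * Q * K₀ + Rᵀ * Q * K₀ * (Q * R) := by
    rw [hTt]; noncomm_ring
  have t1 : trace (K₀ * (Q * R)) = trace (Q * (K₀ * Rᵀ)) := by
    rw [← trace_transpose (K₀ * (Q * R))]
    simp only [transpose_mul, hQt, hK]
    rw [mul_assoc Rᵀ Q K₀, trace_mul_comm Rᵀ (Q * K₀), mul_assoc Q K₀ Rᵀ]
  have t2 : trace (Rᵀ * Q * K₀) = trace (Q * (K₀ * Rᵀ)) := by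
    rw [mul_assoc, trace_mul_comm, mul_assoc]
  have t3 : trace (Rᵀ * Q * K₀ * (Q * R)) = trace (Q * K₀) := by
    rw [mul_assoc (Rᵀ) (Q) K₀, mul_assoc, trace_mul_comm]
    have : Q * K₀ * (Q * R * Rᵀ) = Q * K₀ * Q := by
      rw [mul_assoc Q R, hRR, mul_one]
    rw [mul_assoc (Q * K₀), this, trace_mul_comm, ← mul_assoc, hQ]
  -- dot product pieces
  have hee : e ⬝ᵥ e = (d : ℝ) := by simp [he, dotProduct]
  have hww : w ⬝ᵥ w = e ⬝ᵥ w := by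
    rw [hw, dp_mulVec, hNt, hNN]
  have hwe : w ⬝ᵥ e = e ⬝ᵥ w := dotProduct_comm _ _
  have hcross : w ⬝ᵥ ((Rᵀ * Q) *ᵥ μv) = e ⬝ᵥ ((Rᵀ * Q) *ᵥ μv) := by
    rw [hw, dp_mulVec, hNt]
    have : N * (Rᵀ * Q) = Rᵀ * Q := by
      rw [hN]; simp only [mul_assoc, hRRx, hQx, hQ]
    rw [this]
  -- u = e - w
  have hu : (1 - Rᵀ * Q * R) *ᵥ e = e - w := by
    rw [sub_mulVec, one_mulVec, hw, hN]
  -- C *ᵥ μv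
  have hCm : (1 - Rᵀ * Q) *ᵥ μv = μv - (Rᵀ * Q) *ᵥ μv := by
    rw [sub_mulVec, one_mulVec]
  -- RHS last trace term
  have hlast : trace (Q * (R * (vecMulVec e (fun j => μv j - 1/4)) * Rᵀ))
      = w ⬝ᵥ μv - (1/4) * (w ⬝ᵥ e) := by
    rw [show Q * (R * (vecMulVec e (fun j => μv j - 1/4)) * Rᵀ)
        = (Q * R) * (vecMulVec e (fun j => μv j - 1/4)) * Rᵀ by noncomm_ring]
    rw [tr_vmv, vecMul_transpose, dp_mulVec]
    have h1 : (Q * R)ᵀ * R = N := by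
      rw [hN]; simp [transpose_mul, hQt, mul_assoc]
    rw [h1]
    rw [show e ⬝ᵥ (N *ᵥ (fun j => μv j - 1/4)) = w ⬝ᵥ (fun j => μv j - 1/4) by
      rw [dotProduct_mulVec, ← hNt, vecMul_transpose, ← hw]]
    simp [dotProduct, he, mul_sub, sub_mul, Finset.sum_sub_distrib, Finset.mul_sum,
      mul_comm]
  -- assemble
  have hsum : ∑ i, μv i = e ⬝ᵥ μv := by simp [he, dotProduct]
  have hterm2 : ((-(1/2:ℝ)) • (e - w)) ⬝ᵥ (μv - (Rᵀ * Q) *ᵥ μv)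
      = (-(1/2:ℝ)) * (e ⬝ᵥ μv - w ⬝ᵥ μv) := by
    rw [smul_dotProduct, sub_dotProduct, dotProduct_sub, dotProduct_sub, hcross,
      smul_eq_mul]
    ring
  have hterm3 : ((-(1/2:ℝ)) • (e - w)) ⬝ᵥ ((-(1/2:ℝ)) • (e - w))
      = (d:ℝ)/4 - (1/4) * (e ⬝ᵥ w) := by
    rw [smul_dotProduct, dotProduct_smul, sub_dotProduct, dotProduct_sub,
      dotProduct_sub, hee, hww, hwe, smul_eq_mul, smul_eq_mul]
    ring
  have hRHS : trace (Q * (K₀ - 2 * (K₀ * Rᵀ) + R * (vecMulVec e (fun j => μv j - 1/4)) * Rᵀ))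
      = trace (Q * K₀) - 2 * trace (Q * (K₀ * Rᵀ)) + (w ⬝ᵥ μv - (1/4) * (w ⬝ᵥ e)) := by
    rw [show Q * (K₀ - 2 * (K₀ * Rᵀ) + R * (vecMulVec e (fun j => μv j - 1/4)) * Rᵀ)
        = Q * K₀ - (Q * (K₀ * Rᵀ) + Q * (K₀ * Rᵀ))
          + Q * (R * (vecMulVec e (fun j => μv j - 1/4)) * Rᵀ) by noncomm_ring]
    rw [trace_add, trace_sub, trace_add, hlast]
    ring
  rw [hu, hCm, e1, trace_add, trace_sub, trace_sub, t1, t2, t3, hterm2, hterm3,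
    hRHS, hsum, hwe]
  ring

lemma tripsum {d : ℕ} (C K : Matrix (Fin d) (Fin d) ℝ) :
    ∑ i, ∑ j, ∑ k, C i j * C i k * K j k = trace (C * K * Cᵀ) := by
  simp only [trace, diag, mul_apply, transpose_apply, Finset.sum_mul]
  refine Finset.sum_congr rfl fun i _ => ?_
  rw [Finset.sum_comm]
  refine Finset.sum_congr rfl fun k _ => ?_
  refine Finset.sum_congr rfl fun j _ => ?_
  ring

/-- With `A` of full row rank (`A⁺` its Moore–Penrose pseudoinverse), `R`
orthogonal, and `X̂ = RᵀA⁺AX + ½(I - RᵀA⁺AR)𝟙`, one has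
`(1/d)E[‖X - X̂‖²] = (1/d)Tr(K_{½𝟙}) + (1/d)Tr(A⁺A(K₀ - 2K₀Rᵀ + RMRᵀ))`,
where `M = 𝟙(μ - ¼𝟙)ᵀ`. -/
theorem stmt9 {m d : ℕ} {Ω : Type*} [MeasurableSpace Ω]
    (μ : Measure Ω) [IsProbabilityMeasure μ]
    (A : Matrix (Fin m) (Fin d) ℝ) (Ap : Matrix (Fin d) (Fin m) ℝ)
    (h1 : A * Ap * A = A) (h2 : Ap * A * Ap = Ap)
    (h3 : (A * Ap)ᵀ = A * Ap) (h4 : (Ap * A)ᵀ = Ap * A)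
    (hfullrow : A * Ap = 1)
    (R : Matrix (Fin d) (Fin d) ℝ) (hR : Rᵀ * R = 1) (hR' : R * Rᵀ = 1)
    (X : Ω → Fin d → ℝ)
    (hXi : ∀ i, Integrable (fun ω => X ω i) μ)
    (hXij : ∀ i j, Integrable (fun ω => X ω i * X ω j) μ)
    (μv : Fin d → ℝ) (hμv : ∀ i, μv i = ∫ ω, X ω i ∂μ)
    (K₀ Khalf M : Matrix (Fin d) (Fin d) ℝ)
    (hK₀ : ∀ i j, K₀ i j = ∫ ω, X ω i * X ω j ∂μ)
    (hKhalf : ∀ i j, Khalf i j = ∫ ω, (X ω i - 1/2) * (X ω j - 1/2) ∂μ)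
    (hM : M = Matrix.vecMulVec (fun _ => 1) (fun j => μv j - 1/4))
    (Xhat : Ω → Fin d → ℝ)
    (hXhat : ∀ ω, Xhat ω
      = Rᵀ *ᵥ (Ap *ᵥ (A *ᵥ X ω))
        + (1/2 : ℝ) • ((1 - Rᵀ * (Ap * A) * R) *ᵥ (fun _ => 1))) :
    (1/(d:ℝ)) * ∫ ω, ∑ i, (X ω i - Xhat ω i) ^ 2 ∂μ
      = (1/(d:ℝ)) * Matrix.trace Khalf
        + (1/(d:ℝ)) * Matrix.trace (Ap * A * (K₀ - 2 * (K₀ * Rᵀ) + R * M * Rᵀ)) := by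
  classical
  set e : Fin d → ℝ := fun _ => 1 with he
  set C : Matrix (Fin d) (Fin d) ℝ := 1 - Rᵀ * (Ap * A) with hCdef
  set c : Fin d → ℝ := (-(1/2:ℝ)) • ((1 - Rᵀ * (Ap * A) * R) *ᵥ e) with hcdef
  have hQQ : (Ap * A) * (Ap * A) = Ap * A := by
    rw [← Matrix.mul_assoc, h2]
  have hKsym : K₀ᵀ = K₀ := by
    ext i j
    rw [transpose_apply, hK₀, hK₀]
    simp_rw [mul_comm]
  have key : ∀ ω i, X ω i - Xhat ω i = (∑ j, C i j * X ω j) + c i := by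
    intro ω i
    rw [hXhat]
    have hmv : Rᵀ *ᵥ (Ap *ᵥ (A *ᵥ X ω)) = (Rᵀ * (Ap * A)) *ᵥ X ω := by
      rw [mulVec_mulVec, mulVec_mulVec, Matrix.mul_assoc]
    rw [hmv]
    have hC : (∑ j, C i j * X ω j) = X ω i - ((Rᵀ * (Ap * A)) *ᵥ X ω) i := by
      rw [show (∑ j, C i j * X ω j) = (C *ᵥ X ω) i by simp [mulVec, dotProduct]]
      rw [hCdef, sub_mulVec, one_mulVec, Pi.sub_apply]
    rw [hC, hcdef]
    simp only [Pi.add_apply, Pi.smul_apply, smul_eq_mul]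
    ring
  have hpt : ∀ ω, ∑ i, (X ω i - Xhat ω i) ^ 2
      = (∑ i, ∑ j, ∑ k, C i j * C i k * (X ω j * X ω k))
        + ((∑ i, (2 * c i) * (∑ j, C i j * X ω j)) + ∑ i, c i ^ 2) := by
    intro ω
    rw [← Finset.sum_add_distrib, ← Finset.sum_add_distrib]
    refine Finset.sum_congr rfl fun i _ => ?_
    rw [key ω i, add_sq, pow_two (∑ j, C i j * X ω j), Finset.sum_mul_sum]
    have hterm : ∀ j k, (C i j * X ω j) * (C i k * X ω k)
        = C i j * C i k * (X ω j * X ω k) := by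
      intro j k; ring
    simp_rw [hterm]
    ring
  have intsum : ∀ j, Integrable (fun ω => ∑ k, C j k * X ω k) μ := by
    intro j
    exact integrable_finset_sum _ fun k _ => (hXi k).const_mul _
  have hint : ∫ ω, ∑ i, (X ω i - Xhat ω i) ^ 2 ∂μ
      = (∑ i, ∑ j, ∑ k, C i j * C i k * K₀ j k)
        + ((∑ i, (2 * c i) * (∑ j, C i j * μv j)) + ∑ i, c i ^ 2) := by
    have h1int : Integrable (fun ω => ∑ i, ∑ j, ∑ k, C i j * C i k * (X ω j * X ω k)) μ :=
      integrable_finset_sum _ fun i _ => integrable_finset_sum _ fun j _ =>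
        integrable_finset_sum _ fun k _ => (hXij j k).const_mul _
    have h2int : Integrable (fun ω => ∑ i, (2 * c i) * (∑ j, C i j * X ω j)) μ :=
      integrable_finset_sum _ fun i _ => (intsum i).const_mul _
    have h3int : Integrable (fun _ : Ω => ∑ i, c i ^ 2) μ := integrable_const _
    calc ∫ ω, ∑ i, (X ω i - Xhat ω i) ^ 2 ∂μ
        = ∫ ω, ((∑ i, ∑ j, ∑ k, C i j * C i k * (X ω j * X ω k))
            + ((∑ i, (2 * c i) * (∑ j, C i j * X ω j)) + ∑ i, c i ^ 2)) ∂μ := by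
          exact integral_congr_ae (Filter.Eventually.of_forall fun ω => hpt ω)
      _ = (∑ i, ∑ j, ∑ k, C i j * C i k * K₀ j k)
            + ((∑ i, (2 * c i) * (∑ j, C i j * μv j)) + ∑ i, c i ^ 2) := by
          have h23 : Integrable (fun ω =>
              (∑ i, (2 * c i) * (∑ j, C i j * X ω j)) + ∑ i, c i ^ 2) μ :=
            h2int.add h3int
          rw [integral_add h1int h23, integral_add h2int h3int]
          congr 1
          · rw [integral_finset_sum _ fun i _ => integrable_finset_sum _ fun j _ =>
              integrable_finset_sum _ fun k _ => (hXij j k).const_mul _]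
            refine Finset.sum_congr rfl fun i _ => ?_
            rw [integral_finset_sum _ fun j _ =>
              integrable_finset_sum _ fun k _ => (hXij j k).const_mul _]
            refine Finset.sum_congr rfl fun j _ => ?_
            rw [integral_finset_sum _ fun k _ => (hXij j k).const_mul _]
            refine Finset.sum_congr rfl fun k _ => ?_
            rw [integral_const_mul, hK₀]
          congr 1
          · rw [integral_finset_sum _ fun i _ => (intsum i).const_mul _]
            refine Finset.sum_congr rfl fun i _ => ?_
            rw [integral_const_mul]
            congr 1
            rw [integral_finset_sum _ fun j _ => (hXi j).const_mul _]
            refine Finset.sum_congr rfl fun j _ => ?_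
            rw [integral_const_mul, hμv]
          · simp
  have hid1 : (∑ i, ∑ j, ∑ k, C i j * C i k * K₀ j k) = trace (C * K₀ * Cᵀ) :=
    tripsum C K₀
  have hid2 : (∑ i, (2 * c i) * (∑ j, C i j * μv j)) = 2 * (c ⬝ᵥ (C *ᵥ μv)) := by
    rw [show c ⬝ᵥ (C *ᵥ μv) = ∑ i, c i * ∑ j, C i j * μv j by
      simp [dotProduct, mulVec]]
    rw [Finset.mul_sum]
    refine Finset.sum_congr rfl fun i _ => ?_
    ring
  have hid3 : (∑ i, c i ^ 2) = c ⬝ᵥ c := by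
    simp [dotProduct, sq]
  have hKh : trace Khalf = trace K₀ - (∑ i, μv i) + (d : ℝ)/4 := by
    have hdiag : ∀ i, Khalf i i = K₀ i i - μv i + 1/4 := by
      intro i
      rw [hKhalf, hK₀, hμv]
      have hfe : (fun ω => (X ω i - 1/2) * (X ω i - 1/2))
          = fun ω => (X ω i * X ω i - X ω i) + (1/4 : ℝ) := funext fun ω => by ring
      have hsub : Integrable (fun ω => X ω i * X ω i - X ω i) μ :=
        (hXij i i).sub (hXi i)
      rw [hfe, integral_add hsub (integrable_const _),
        integral_sub (hXij i i) (hXi i), integral_const]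
      simp
    simp only [trace, diag]
    rw [Finset.sum_congr rfl fun i _ => hdiag i]
    rw [Finset.sum_add_distrib, Finset.sum_sub_distrib]
    simp
    ring
  have main : ∫ ω, ∑ i, (X ω i - Xhat ω i) ^ 2 ∂μ
      = trace Khalf + trace ((Ap * A) * (K₀ - 2 * (K₀ * Rᵀ) + R * M * Rᵀ)) := by
    rw [hint, hid1, hid2, hid3, hKh, hM]
    have halg := alg (Ap * A) R K₀ μv hQQ h4 hR' hKsym
    rw [hCdef, hcdef, he]
    linarith [halg]
  rw [main, mul_add]
end
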